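/- Let k ≥ 0 be an integer and n = 8k+6, let a, b, c be the generators of the Weierstrass group W_n, and set A = c·b·a (so A = −[[1, 8k+8], [0, 1]]). Then the element γ = a·A^k·c·a·b·a·b·a·c of W_{8k+6} satisfies |tr γ| = (4k+3)² + 1/(4k+3)² > 2, and (1, 1) is an eigenvector of γ. Hence γ is a hyperbolic element of W_{8k+6} fixing the boundary point 1, i.e. a special element of W_{8k+6}. -/

import Mathlib

noncomputable section

open Matrix

abbrev SL2R := Matrix.SpecialLinearGroup (Fin 2) ℝ

/-- Generator `a` of the Weierstrass groups. -/
def Wa : SL2R := ⟨!![1, 2; -1, -1], by norm_num [Matrix.det_fin_two_of]⟩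

/-- Generator `b = √n · [[1,1],[-(n+1)/n,-1]]` of the `n`-th Weierstrass group. -/
def Wb (n : ℕ) (hn : 0 < n) : SL2R :=
  ⟨Real.sqrt n • !![1, 1; -((n : ℝ) + 1) / n, -1], by
    have h0 : (0:ℝ) ≤ n := Nat.cast_nonneg n
    have hne : (n : ℝ) ≠ 0 := Nat.cast_ne_zero.mpr hn.ne'
    have h : Real.sqrt n ^ 2 = n := Real.sq_sqrt h0
    rw [Matrix.det_smul]
    simp only [Matrix.det_fin_two_of, Fintype.card_fin]
    field_simp
    rw [h]; ring⟩

/-- Generator `c = (1/√n) · [[0,n],[-1,0]]` of the `n`-th Weierstrass group. -/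
def Wc (n : ℕ) (hn : 0 < n) : SL2R :=
  ⟨(1 / Real.sqrt n) • !![0, (n : ℝ); -1, 0], by
    have h0 : (0:ℝ) ≤ n := Nat.cast_nonneg n
    have hne : (n : ℝ) ≠ 0 := Nat.cast_ne_zero.mpr hn.ne'
    have h : Real.sqrt n ^ 2 = n := Real.sq_sqrt h0
    have hs : Real.sqrt n ≠ 0 := by
      intro hs; rw [hs] at h; simp at h; exact hne h.symm
    rw [Matrix.det_smul]
    simp only [Matrix.det_fin_two_of, Fintype.card_fin]
    field_simp
    rw [h]; ring⟩

/-- The `n`-th Weierstrass group. -/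
def W (n : ℕ) (hn : 0 < n) : Subgroup SL2R :=
  Subgroup.closure {Wa, Wb n hn, Wc n hn}

/-- `γ` fixes the boundary point `x ∈ ℝ`: `(x,1)` is an eigenvector of `γ`. -/
def FixesBoundary (γ : SL2R) (x : ℝ) : Prop :=
  ∃ t : ℝ, t ≠ 0 ∧ (γ : Matrix (Fin 2) (Fin 2) ℝ).mulVec ![x, 1] = t • ![x, 1]

/-- `γ` fixes the boundary point `∞`: `(1,0)` is an eigenvector of `γ`. -/
def FixesInfty (γ : SL2R) : Prop :=
  ∃ t : ℝ, t ≠ 0 ∧ (γ : Matrix (Fin 2) (Fin 2) ℝ).mulVec ![1, 0] = t • ![1, 0]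

/-- `γ ∈ SL(2,ℝ)` is parabolic: `γ ≠ ±1` and `|tr γ| = 2`. -/
def IsParabolic (γ : SL2R) : Prop :=
  γ ≠ 1 ∧ γ ≠ -1 ∧ |Matrix.trace (γ : Matrix (Fin 2) (Fin 2) ℝ)| = 2

/-- `γ ∈ SL(2,ℝ)` is hyperbolic: `|tr γ| > 2`. -/
def IsHyperbolic (γ : SL2R) : Prop :=
  2 < |Matrix.trace (γ : Matrix (Fin 2) (Fin 2) ℝ)|

/-- The element `γ = a·A^k·c·a·b·a·b·a·c` of the Weierstrass group `W_{8k+6}`,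
where `A = c·b·a`. -/
def specialW8k6 (k : ℕ) : SL2R :=
  Wa * (Wc (8 * k + 6) (by omega) * Wb (8 * k + 6) (by omega) * Wa) ^ k *
    Wc (8 * k + 6) (by omega) * Wa * Wb (8 * k + 6) (by omega) * Wa *
    Wb (8 * k + 6) (by omega) * Wa * Wc (8 * k + 6) (by omega)

/-!
The factors `√n` and `1/√n` of `b` and `c` cancel in `c·b·a = -[[1, n+2], [0, 1]]` and in
`T = c·a·b·a·b·a·c`, so `γ = (-1)^k · a · [[1, k(n+2)], [0, 1]] · T` with rational entries.
For `n = 8k+6` a direct computation gives `γ·(1,1) = ((-1)^k/(4k+3)²)·(1,1)`. An element of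
`SL(2)` with eigenvalue `t` has the other eigenvalue `t⁻¹`, so its trace is `t + t⁻¹`, which
yields `|tr γ| = (4k+3)² + 1/(4k+3)²`.
-/

namespace Matrix

theorem SpecialLinearGroup.trace_eq_add_inv_of_mulVec_eq_smul {K : Type*} [Field K]
    (M : SpecialLinearGroup (Fin 2) K) {v : Fin 2 → K} (hv : v ≠ 0) {t : K}
    (h : (M : Matrix (Fin 2) (Fin 2) K) *ᵥ v = t • v) :
    trace (M : Matrix (Fin 2) (Fin 2) K) = t + t⁻¹ := by
  have hroot : (M : Matrix (Fin 2) (Fin 2) K).charpoly.eval t = 0 := by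
    rw [eval_charpoly]
    refine exists_mulVec_eq_zero_iff.mp ⟨v, hv, ?_⟩
    rw [sub_mulVec, h, scalar_apply, ← smul_one_eq_diagonal, smul_mulVec, one_mulVec, sub_self]
  rw [charpoly_fin_two, M.det_coe] at hroot
  simp only [map_one, Polynomial.eval_add, Polynomial.eval_sub, Polynomial.eval_pow,
    Polynomial.eval_X, Polynomial.eval_mul, Polynomial.eval_C, Polynomial.eval_one] at hroot
  have ht : t ≠ 0 := by
    rintro rfl
    norm_num at hroot
  field_simp
  linear_combination -hroot

theorem unitriangular_fin_two_pow {R : Type*} [CommRing R] (x : R) (k : ℕ) :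
    !![1, x; 0, 1] ^ k = !![1, k * x; 0, 1] := by
  induction k with
  | zero => simp [one_fin_two]
  | succ k ih => rw [pow_succ, ih, mul_fin_two]; congr <;> push_cast <;> ring

end Matrix

section

variable (n : ℕ) (hn : 0 < n)

theorem coe_Wc_mul_Wb_mul_Wa :
    ((Wc n hn * Wb n hn * Wa : SL2R) : Matrix (Fin 2) (Fin 2) ℝ) =
      -!![1, (n : ℝ) + 2; 0, 1] := by
  have hs : Real.sqrt n ≠ 0 := by positivity
  have hn' : (n : ℝ) ≠ 0 := by positivity
  simp only [Matrix.SpecialLinearGroup.coe_mul]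
  simp only [Wa, Wb, Wc, Matrix.smul_mul, Matrix.mul_smul, smul_smul]
  rw [mul_one_div_cancel hs, one_smul, mul_fin_two, mul_fin_two]
  ext i j
  fin_cases i <;> fin_cases j <;>
    simp only [Fin.zero_eta, Fin.mk_one, of_apply, cons_val_zero, cons_val_one,
      Matrix.neg_apply] <;> field_simp <;> ring

theorem coe_Wc_mul_Wa_mul_Wb_mul_Wa_mul_Wb_mul_Wa_mul_Wc :
    ((Wc n hn * Wa * Wb n hn * Wa * Wb n hn * Wa * Wc n hn : SL2R) :
        Matrix (Fin 2) (Fin 2) ℝ) =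
      !![((n : ℝ) + 4) / n, -2; ((n : ℝ) ^ 2 + 4 * n + 8) / n ^ 2, -((n : ℝ) + 4) / n] := by
  have hs : Real.sqrt n ≠ 0 := by positivity
  have hn' : (n : ℝ) ≠ 0 := by positivity
  simp only [Matrix.SpecialLinearGroup.coe_mul]
  simp only [Wa, Wb, Wc, Matrix.smul_mul, Matrix.mul_smul, smul_smul]
  rw [show 1 / Real.sqrt n * (Real.sqrt n * (Real.sqrt n * (1 / Real.sqrt n))) = 1 by
    field_simp, one_smul]
  simp only [mul_fin_two]
  ext i j
  fin_cases i <;> fin_cases j <;>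
    simp only [Fin.zero_eta, Fin.mk_one, of_apply, cons_val_zero, cons_val_one] <;>
    field_simp <;> ring

theorem Wa_mem_W : Wa ∈ W n hn :=
  Subgroup.subset_closure (by simp)

theorem Wb_mem_W : Wb n hn ∈ W n hn :=
  Subgroup.subset_closure (by simp)

theorem Wc_mem_W : Wc n hn ∈ W n hn :=
  Subgroup.subset_closure (by simp)

end

theorem specialW8k6_mem_W (k : ℕ) : specialW8k6 k ∈ W (8 * k + 6) (by omega) := by
  unfold specialW8k6
  apply_rules [mul_mem, pow_mem, Wa_mem_W, Wb_mem_W, Wc_mem_W]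

theorem specialW8k6_eq (k : ℕ) :
    specialW8k6 k = Wa * (Wc (8 * k + 6) (by omega) * Wb (8 * k + 6) (by omega) * Wa) ^ k *
      (Wc (8 * k + 6) (by omega) * Wa * Wb (8 * k + 6) (by omega) * Wa *
        Wb (8 * k + 6) (by omega) * Wa * Wc (8 * k + 6) (by omega)) := by
  simp only [specialW8k6, mul_assoc]

theorem specialW8k6_mulVec_one_one (k : ℕ) :
    (specialW8k6 k : Matrix (Fin 2) (Fin 2) ℝ) *ᵥ ![1, 1] =
      ((-1) ^ k / (4 * (k : ℝ) + 3) ^ 2) • ![1, 1] := by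
  rw [specialW8k6_eq, Matrix.SpecialLinearGroup.coe_mul, Matrix.SpecialLinearGroup.coe_mul,
    Matrix.SpecialLinearGroup.coe_pow, coe_Wc_mul_Wb_mul_Wa,
    coe_Wc_mul_Wa_mul_Wb_mul_Wa_mul_Wb_mul_Wa_mul_Wc, ← neg_one_smul ℝ, smul_pow,
    unitriangular_fin_two_pow]
  have hm : 4 * (k : ℝ) + 3 ≠ 0 := by positivity
  simp only [Wa, Matrix.mul_smul, Matrix.smul_mul, smul_mulVec, mul_fin_two]
  ext i
  fin_cases i <;>
    simp only [mulVec, dotProduct, Fin.sum_univ_two, of_apply, cons_val_zero, cons_val_one,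
      Pi.smul_apply, smul_eq_mul, Fin.zero_eta, Fin.mk_one] <;>
    push_cast <;> field_simp <;> ring

/-- For `k ≥ 0` and `n = 8k+6`: `A = c·b·a = −[[1, 8k+8], [0, 1]]`, and
`γ = a·A^k·c·a·b·a·b·a·c` satisfies `|tr γ| = (4k+3)² + 1/(4k+3)² > 2` and has
`(1, 1)` as an eigenvector; hence `γ` is a special (hyperbolic) element of
`W_{8k+6}` fixing the boundary point `1`. -/
theorem weierstrass_8k6_special (k : ℕ) :
    (Wc (8 * k + 6) (by omega) * Wb (8 * k + 6) (by omega) * Wa =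
      -(show SL2R from
        ⟨!![1, 8 * (k : ℝ) + 8; 0, 1], by norm_num [Matrix.det_fin_two_of]⟩)) ∧
    |Matrix.trace ((specialW8k6 k : SL2R) : Matrix (Fin 2) (Fin 2) ℝ)| =
      (4 * (k : ℝ) + 3) ^ 2 + 1 / (4 * (k : ℝ) + 3) ^ 2 ∧
    2 < |Matrix.trace ((specialW8k6 k : SL2R) : Matrix (Fin 2) (Fin 2) ℝ)| ∧
    (∃ t : ℝ, t ≠ 0 ∧
      ((specialW8k6 k : SL2R) : Matrix (Fin 2) (Fin 2) ℝ).mulVec ![1, 1] = t • ![1, 1]) ∧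
    IsHyperbolic (specialW8k6 k) ∧
    FixesBoundary (specialW8k6 k) 1 ∧
    specialW8k6 k ∈ W (8 * k + 6) (by omega) := by
  have hev := specialW8k6_mulVec_one_one k
  set m : ℝ := 4 * k + 3
  have hm : 3 ≤ m := by simp [m]
  have ht : (-1) ^ k / m ^ 2 ≠ 0 := by positivity
  have htrace : trace (specialW8k6 k : Matrix (Fin 2) (Fin 2) ℝ) =
      (-1) ^ k * (m ^ 2 + 1 / m ^ 2) := by
    rw [SpecialLinearGroup.trace_eq_add_inv_of_mulVec_eq_smul _ (by simp) hev]
    rcases neg_one_pow_eq_or ℝ k with h | h <;> rw [h] <;> field_simp <;> ring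
  have habs : |trace (specialW8k6 k : Matrix (Fin 2) (Fin 2) ℝ)| = m ^ 2 + 1 / m ^ 2 := by
    rw [htrace, abs_mul, abs_neg_one_pow, one_mul, abs_of_pos (by positivity)]
  have hgt : 2 < |trace (specialW8k6 k : Matrix (Fin 2) (Fin 2) ℝ)| := by
    have : 0 < 1 / m ^ 2 := by positivity
    rw [habs]
    nlinarith
  refine ⟨Subtype.ext ?_, habs, hgt, ⟨_, ht, hev⟩, hgt, ⟨_, ht, hev⟩, specialW8k6_mem_W k⟩
  rw [coe_Wc_mul_Wb_mul_Wa, Matrix.SpecialLinearGroup.coe_neg]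
  push_cast
  ring_nf
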